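/- For every complex s with Re(s) > 1, ∑_{n≥1} [(-1)^{n-1} s(s+1)⋯(s+n-1)/n!] · (ζ(s+n) − 1) = 2^{-s}. -/

import Mathlib

/-! Expanding `ζ(s + n) - 1 = ∑_{m ≥ 2} m^(-s-n)` turns the left side into a double series. For
fixed `m`, its sum over `n` is `m^(-s) (1 - (1 + 1/m)^(-s)) = m^(-s) - (m + 1)^(-s)` by the binomial
series, since `(-1)^(n-1) s(s+1)⋯(s+n-1)/n! = -binom(-s, n)`; the series over `m` then telescopes
to `2^(-s)`. The double series converges absolutely because `1/m ≤ 1/2` lies inside the disc of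
convergence of the binomial series, which justifies swapping the two summations. -/

open Complex Finset

theorem ascPochhammer_eval_eq_prod_range {R : Type*} [CommSemiring R] (n : ℕ) (r : R) :
    (ascPochhammer R n).eval r = ∏ j ∈ range n, (r + j) := by
  induction n with
  | zero => simp
  | succ n ih => rw [ascPochhammer_succ_eval, ih, prod_range_succ]

theorem Ring.choose_neg_eq_prod_div {K : Type*} [Field K] [CharZero K] (r : K) (n : ℕ) :
    Ring.choose (-r) n = (-1) ^ n * (∏ j ∈ range n, (r + j)) / n.factorial := by
  have hfact : (n.factorial : K) ≠ 0 := by exact_mod_cast n.factorial_ne_zero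
  have hmulti : (n.factorial : K) * Ring.multichoose r n = ∏ j ∈ range n, (r + j) := by
    rw [← nsmul_eq_mul, Ring.factorial_nsmul_multichoose_eq_ascPochhammer,
      Polynomial.ascPochhammer_smeval_eq_eval, ascPochhammer_eval_eq_prod_range]
  rw [Ring.choose_neg', Units.smul_def, Int.coe_negOnePow_natCast, zsmul_eq_mul, ← hmulti]
  push_cast
  field_simp

theorem hasSum_choose_mul_pow (a : ℂ) {z : ℂ} (hz : ‖z‖ < 1) :
    HasSum (fun n ↦ Ring.choose a n * z ^ n) ((1 + z) ^ a) := by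
  have hz' : z ∈ Metric.eball (0 : ℂ) 1 := by
    rwa [Metric.mem_eball, ← ENNReal.ofReal_one, edist_lt_ofReal, dist_zero_right]
  simpa [binomialSeries, FormalMultilinearSeries.ofScalars_apply_eq, mul_comm] using
    one_add_cpow_hasFPowerSeriesOnBall_zero.hasSum hz'

theorem summable_norm_choose_mul_pow (a : ℂ) {r : ℝ} (hr₀ : 0 ≤ r) (hr : r < 1) :
    Summable (fun n ↦ ‖Ring.choose a n‖ * r ^ n) := by
  lift r to NNReal using hr₀
  simpa [binomialSeries, FormalMultilinearSeries.ofScalars_norm] using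
    (binomialSeries ℂ a).summable_norm_mul_pow
      ((ENNReal.coe_lt_one_iff.2 (by exact_mod_cast hr)).trans_le binomialSeries_radius_ge_one)

theorem HasSum.telescope {α : Type*} [AddCommGroup α] [TopologicalSpace α]
    [IsTopologicalAddGroup α] {f : ℕ → α} {a : α} (hf : HasSum f a) :
    HasSum (fun n ↦ f n - f (n + 1)) (f 0) := by
  simpa using hf.sub ((hasSum_nat_add_iff' 1).2 hf)

theorem hasSum_nat_add_two_cpow_neg {w : ℂ} (hw : 1 < w.re) :
    HasSum (fun m : ℕ ↦ ((m : ℂ) + 2) ^ (-w)) (riemannZeta w - 1) := by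
  have hw0 : w ≠ 0 := by rintro rfl; norm_num at hw
  have h := (summable_one_div_nat_cpow.2 hw).hasSum
  rw [← zeta_eq_tsum_one_div_nat_cpow hw] at h
  have h2 := (hasSum_nat_add_iff' 2).2 h
  simp only [Nat.cast_add, Nat.cast_ofNat, one_div, sum_range_succ, range_one, sum_singleton,
    CharP.cast_eq_zero, zero_cpow hw0, inv_zero, Nat.cast_one, one_cpow, inv_one, zero_add] at h2
  simpa only [cpow_neg] using h2

theorem Complex.cpow_neg_add_natCast {x : ℂ} (hx : x ≠ 0) (s : ℂ) (n : ℕ) :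
    x ^ (-(s + n)) = x ^ (-s) * x⁻¹ ^ n := by
  rw [neg_add, cpow_add _ _ hx, cpow_neg x n, cpow_natCast, inv_pow]

theorem hasSum_riemannZeta_add_succ_sub_one {s : ℂ} (hs : 0 < s.re) (n : ℕ) :
    HasSum (fun m : ℕ ↦ ((m : ℂ) + 2) ^ (-s) * ((m : ℂ) + 2)⁻¹ ^ (n + 1))
      (riemannZeta (s + (n + 1)) - 1) := by
  have hw : 1 < (s + (n + 1)).re := by
    simp only [add_re, natCast_re, one_re]; linarith [n.cast_nonneg (α := ℝ)]
  convert hasSum_nat_add_two_cpow_neg hw using 2 with m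
  have hm : (m : ℂ) + 2 ≠ 0 := by exact_mod_cast (m + 2).succ_ne_zero
  rw [← Nat.cast_succ, cpow_neg_add_natCast hm]

theorem hasSum_neg_choose_neg_mul_inv_pow (s : ℂ) {a : ℝ} (ha : 1 < a) :
    HasSum (fun n : ℕ ↦ -Ring.choose (-s) (n + 1) * ((a : ℂ) ^ (-s) * (a : ℂ)⁻¹ ^ (n + 1)))
      ((a : ℂ) ^ (-s) - ((a : ℂ) + 1) ^ (-s)) := by
  have ha₀ : 0 < a := by linarith
  have hz : ‖(a : ℂ)⁻¹‖ < 1 := by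
    rw [norm_inv, norm_real, Real.norm_of_nonneg ha₀.le]; exact inv_lt_one_of_one_lt₀ ha
  have hbinom := (hasSum_nat_add_iff' 1).2 (hasSum_choose_mul_pow (-s) hz)
  have hsplit : (a : ℂ) ^ (-s) * (1 + (a : ℂ)⁻¹) ^ (-s) = ((a : ℂ) + 1) ^ (-s) := by
    have h := mul_cpow_ofReal_nonneg ha₀.le (by positivity : 0 ≤ 1 + a⁻¹) (-s)
    push_cast at h
    rw [mul_add, mul_inv_cancel₀ (ofReal_ne_zero.2 ha₀.ne'), mul_one] at h
    rw [← h, add_comm]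
  have h := hbinom.mul_left (-(a : ℂ) ^ (-s))
  rw [sum_range_one, Ring.choose_zero_right, pow_zero, mul_one, mul_sub, neg_mul, hsplit,
    mul_one, neg_sub_neg] at h
  exact h.congr_fun fun n ↦ by ring

theorem summable_neg_choose_neg_mul_cpow_mul_inv_pow {s : ℂ} (hs : 1 < s.re) :
    Summable (fun p : ℕ × ℕ ↦
      -Ring.choose (-s) (p.1 + 1) * (((p.2 : ℂ) + 2) ^ (-s) * ((p.2 : ℂ) + 2)⁻¹ ^ (p.1 + 1))) := by
  have hcast (m : ℕ) : (m : ℂ) + 2 = ((m + 2 : ℕ) : ℂ) := by push_cast; rfl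
  have hcoeff : Summable (fun n ↦ ‖Ring.choose (-s) (n + 1)‖ * (1 / 2 : ℝ) ^ (n + 1)) :=
    (summable_nat_add_iff 1).2 (summable_norm_choose_mul_pow (-s) (by norm_num) (by norm_num))
  have hnorm (m : ℕ) : ‖((m : ℂ) + 2) ^ (-s)‖ = ((m + 2 : ℕ) : ℝ) ^ (-s.re) := by
    rw [hcast, norm_natCast_cpow_of_pos (by omega), neg_re]
  have hzeta : Summable (fun m : ℕ ↦ ‖((m : ℂ) + 2) ^ (-s)‖) := by
    simpa only [hnorm] using (summable_nat_add_iff 2).2 (Real.summable_nat_rpow.2 (by linarith))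
  refine Summable.of_norm ((hcoeff.mul_of_nonneg hzeta (fun _ ↦ by positivity)
    (fun _ ↦ by positivity)).of_nonneg_of_le (fun _ ↦ norm_nonneg _) ?_)
  rintro ⟨n, m⟩
  have hinv : ‖((m : ℂ) + 2)⁻¹‖ ≤ 1 / 2 := by
    rw [norm_inv, one_div, hcast, norm_natCast]
    apply inv_anti₀ two_pos
    push_cast; linarith [m.cast_nonneg (α := ℝ)]
  calc ‖-Ring.choose (-s) (n + 1) * (((m : ℂ) + 2) ^ (-s) * ((m : ℂ) + 2)⁻¹ ^ (n + 1))‖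
      = ‖Ring.choose (-s) (n + 1)‖ * ‖((m : ℂ) + 2)⁻¹‖ ^ (n + 1) * ‖((m : ℂ) + 2) ^ (-s)‖ := by
        rw [norm_mul, norm_neg, norm_mul, norm_pow]; ring
    _ ≤ ‖Ring.choose (-s) (n + 1)‖ * (1 / 2) ^ (n + 1) * ‖((m : ℂ) + 2) ^ (-s)‖ := by gcongr

/-- For `Re s > 1`, `∑_{n≥1} [(-1)^{n-1} s(s+1)⋯(s+n-1)/n!] (ζ(s+n) − 1) = 2^{-s}`. -/
theorem zeta_alternating_series (s : ℂ) (hs : 1 < s.re) :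
    ∑' n : ℕ, ((-1) ^ n * (∏ i ∈ Finset.range (n + 1), (s + i)) / ((n + 1).factorial : ℂ)) *
      (riemannZeta (s + (n + 1)) - 1) = (2 : ℂ) ^ (-s) := by
  set f : ℕ → ℕ → ℂ := fun n m ↦
    -Ring.choose (-s) (n + 1) * (((m : ℂ) + 2) ^ (-s) * ((m : ℂ) + 2)⁻¹ ^ (n + 1))
  have hcoeff (n : ℕ) : (-1) ^ n * (∏ i ∈ range (n + 1), (s + i)) / ((n + 1).factorial : ℂ) =
      -Ring.choose (-s) (n + 1) := by
    rw [Ring.choose_neg_eq_prod_div, pow_succ]; ring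
  have hcolumn (n : ℕ) : -Ring.choose (-s) (n + 1) * (riemannZeta (s + (n + 1)) - 1) =
      ∑' m, f n m :=
    (((hasSum_riemannZeta_add_succ_sub_one (by linarith) n).mul_left _).tsum_eq).symm
  have hrow (m : ℕ) : ∑' n, f n m = ((m : ℂ) + 2) ^ (-s) - (((m + 1 : ℕ) : ℂ) + 2) ^ (-s) := by
    have h := hasSum_neg_choose_neg_mul_inv_pow s (a := (m : ℝ) + 2)
      (by linarith [m.cast_nonneg (α := ℝ)])
    push_cast at h ⊢
    rw [h.tsum_eq]; ring_nf
  calc _ = ∑' n, ∑' m, f n m := tsum_congr fun n ↦ by rw [hcoeff, hcolumn]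
    _ = ∑' m, ∑' n, f n m := (summable_neg_choose_neg_mul_cpow_mul_inv_pow hs).tsum_comm.symm
    _ = ∑' m : ℕ, (((m : ℂ) + 2) ^ (-s) - (((m + 1 : ℕ) : ℂ) + 2) ^ (-s)) := tsum_congr hrow
    _ = (2 : ℂ) ^ (-s) := by
      simpa only [Nat.cast_add, Nat.cast_one, CharP.cast_eq_zero, zero_add] using
        (hasSum_nat_add_two_cpow_neg hs).telescope.tsum_eq
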